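/- arXiv:2002.01781 — 4 statements merged into one kernel-verified Lean document; each statement's English description precedes it below -/
import Mathlib

section
/- Let L > 0, C₁ > 0, C₂ > 0 be real numbers and q₁ < q₂ positive real numbers. Set ħ₁ = (L/C₁)^{1/q₁}, ħ₂ = (L/C₂)^{1/q₂}, h* = (C₁/C₂)^{1/(q₂-q₁)}, and for h > 0 set βᵢ(h) = min(L, Cᵢ·h^{qᵢ}) for i = 1, 2. If h* ≥ max(ħ₁, ħ₂), then β₂(h) ≤ β₁(h) for every h > 0. -/
/-- If `h* ≥ max(ℏ₁, ℏ₂)`, then `β₂(h) ≤ β₁(h)` for every `h > 0`,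
where `βᵢ(h) = min(L, Cᵢ·h^{qᵢ})`. -/
theorem beta_compare_of_hstar_ge_max
    (L C₁ C₂ q₁ q₂ : ℝ) (hL : 0 < L) (hC₁ : 0 < C₁) (hC₂ : 0 < C₂)
    (hq₁ : 0 < q₁) (hq : q₁ < q₂)
    (ℏ₁ ℏ₂ hstar : ℝ)
    (hℏ₁ : ℏ₁ = (L / C₁) ^ (1 / q₁)) (hℏ₂ : ℏ₂ = (L / C₂) ^ (1 / q₂))
    (hstar_def : hstar = (C₁ / C₂) ^ (1 / (q₂ - q₁)))
    (hcase : max ℏ₁ ℏ₂ ≤ hstar) :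
    ∀ h : ℝ, 0 < h → min L (C₂ * h ^ q₂) ≤ min L (C₁ * h ^ q₁) := by
  intro h hh
  have hqd : (0:ℝ) < q₂ - q₁ := sub_pos.mpr hq
  rcases le_total h hstar with hle | hge
  · -- show C₂ * h^q₂ ≤ C₁ * h^q₁
    have hstar_pow : hstar ^ (q₂ - q₁) = C₁ / C₂ := by
      rw [hstar_def, one_div, Real.rpow_inv_rpow (by positivity) hqd.ne']
    have h1 : h ^ (q₂ - q₁) ≤ C₁ / C₂ := by
      rw [← hstar_pow]
      exact Real.rpow_le_rpow hh.le hle hqd.le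
    have h2 : C₂ * h ^ (q₂ - q₁) ≤ C₁ := by
      rw [← le_div_iff₀' hC₂]; exact h1
    have h3 : C₂ * h ^ q₂ ≤ C₁ * h ^ q₁ := by
      have : h ^ q₂ = h ^ (q₂ - q₁) * h ^ q₁ := by
        rw [← Real.rpow_add hh]; ring_nf
      rw [this, ← mul_assoc]
      exact mul_le_mul_of_nonneg_right h2 (Real.rpow_nonneg hh.le q₁)
    exact min_le_min le_rfl h3
  · -- h ≥ hstar ≥ ℏ₁, so L ≤ C₁ * h^q₁
    have hℏ₁h : ℏ₁ ≤ h := le_trans (le_trans (le_max_left _ _) hcase) hge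
    have hℏ₁pow : ℏ₁ ^ q₁ = L / C₁ := by
      rw [hℏ₁, one_div, Real.rpow_inv_rpow (by positivity) hq₁.ne']
    have h1 : L / C₁ ≤ h ^ q₁ := by
      rw [← hℏ₁pow]
      exact Real.rpow_le_rpow (by rw [hℏ₁]; positivity) hℏ₁h hq₁.le
    have h2 : L ≤ C₁ * h ^ q₁ := by
      rw [← div_le_iff₀' hC₁]; exact h1
    calc min L (C₂ * h ^ q₂) ≤ L := min_le_left _ _
      _ ≤ min L (C₁ * h ^ q₁) := le_min le_rfl h2
end

section
/- Let L > 0, C₁ > 0, C₂ > 0 be real numbers and q₁ < q₂ positive real numbers, and let h > 0. Set ħ₁ = (L/C₁)^{1/q₁}, ħ₂ = (L/C₂)^{1/q₂}, h* = (C₁/C₂)^{1/(q₂-q₁)}, and βᵢ = min(L, Cᵢ·h^{qᵢ}) for i = 1, 2. Let X₁ and X₂ be independent real random variables on a probability space (Ω, ℙ), with Xᵢ uniformly distributed on [0, βᵢ]. If h* ≥ max(ħ₁, ħ₂) and 0 < h ≤ ħ₁, then ℙ{X₁ ≤ X₂} = (1/2)·(h/h*)^{q₂-q₁}. -/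
/-! Since h ≤ ħ₁ ≤ h*, the cap L is inactive in both β's:
β₁ = C₁ h^q₁ and β₂ = C₂ h^q₂ ≤ β₁. For independent uniforms on [0, β₁] ⊇ [0, β₂],
the event X₁ ≤ X₂ is the triangle 0 ≤ x ≤ y ≤ β₂ of area β₂²/2 under the density
1/(β₁β₂), so its probability is β₂/(2β₁) = (C₂/C₁) h^(q₂-q₁) / 2 = (h/h*)^(q₂-q₁) / 2. -/

open MeasureTheory ProbabilityTheory Set

lemma Real.mul_rpow_le_iff_le_rpow_one_div {C L q h : ℝ} (hC : 0 < C) (hL : 0 ≤ L) (hq : 0 < q)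
    (hh : 0 ≤ h) : C * h ^ q ≤ L ↔ h ≤ (L / C) ^ (1 / q) := by
  rw [one_div, Real.le_rpow_inv_iff_of_pos hh (by positivity) hq, le_div_iff₀' hC]

lemma withDensity_ofReal_indicator_const {α : Type*} [MeasurableSpace α] (μ : Measure α)
    {s : Set α} (hs : MeasurableSet s) (c : ℝ) :
    μ.withDensity (fun x => ENNReal.ofReal (s.indicator (fun _ => c) x))
      = ENNReal.ofReal c • μ.restrict s := by
  have : (fun x => ENNReal.ofReal (s.indicator (fun _ => c) x))
      = s.indicator (fun _ => ENNReal.ofReal c) := by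
    ext x; by_cases hx : x ∈ s <;> simp [hx]
  rw [this, withDensity_indicator hs, withDensity_const]

lemma ProbabilityTheory.IndepFun.measure_setOf_le_eq_prod_map {Ω : Type*} [MeasurableSpace Ω]
    {P : Measure Ω} [IsFiniteMeasure P] {X Y : Ω → ℝ} (hX : AEMeasurable X P)
    (hY : AEMeasurable Y P) (hXY : IndepFun X Y P) :
    P {ω | X ω ≤ Y ω} = ((P.map X).prod (P.map Y)) {p : ℝ × ℝ | p.1 ≤ p.2} := by
  rw [← (indepFun_iff_map_prod_eq_prod_map_map hX hY).1 hXY,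
    Measure.map_apply_of_aemeasurable (hX.prodMk hY)
      (measurableSet_le measurable_fst measurable_snd)]
  rfl

lemma lintegral_Icc_ofReal_id {b : ℝ} (hb : 0 ≤ b) :
    ∫⁻ y in Icc 0 b, ENNReal.ofReal y = ENNReal.ofReal (b ^ 2 / 2) := by
  have hint : IntegrableOn (fun y : ℝ => y) (Icc 0 b) := continuous_id.integrableOn_Icc
  rw [← ofReal_integral_eq_lintegral_ofReal hint
      ((ae_restrict_iff' measurableSet_Icc).2 (Filter.Eventually.of_forall fun y hy => hy.1)),
    integral_Icc_eq_integral_Ioc, ← intervalIntegral.integral_of_le hb, integral_id]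
  ring_nf

lemma volume_restrict_Icc_prod_setOf_le {a b : ℝ} (hb : 0 ≤ b) (hba : b ≤ a) :
    ((volume.restrict (Icc 0 a)).prod (volume.restrict (Icc 0 b))) {p : ℝ × ℝ | p.1 ≤ p.2}
      = ENNReal.ofReal (b ^ 2 / 2) := by
  rw [Measure.prod_apply_symm (measurableSet_le measurable_fst measurable_snd),
    ← lintegral_Icc_ofReal_id hb]
  refine setLIntegral_congr_fun measurableSet_Icc fun y hy => ?_
  have hpre : (fun x => (x, y)) ⁻¹' {p : ℝ × ℝ | p.1 ≤ p.2} = Iic y := rfl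
  have hslice : Iic y ∩ Icc 0 a = Icc 0 y := by ext x; grind
  rw [hpre, Measure.restrict_apply measurableSet_Iic, hslice, Real.volume_Icc, sub_zero]

lemma measure_setOf_le_of_uniform_Icc {Ω : Type*} [MeasurableSpace Ω] {P : Measure Ω}
    [IsProbabilityMeasure P] {a b : ℝ} (ha : 0 < a) (hb : 0 < b) (hba : b ≤ a) {X Y : Ω → ℝ}
    (hX : Measurable X) (hY : Measurable Y) (hXY : IndepFun X Y P)
    (hXunif : P.map X =
      volume.withDensity (fun x => ENNReal.ofReal ((Icc (0:ℝ) a).indicator (fun _ => 1 / a) x)))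
    (hYunif : P.map Y =
      volume.withDensity (fun x => ENNReal.ofReal ((Icc (0:ℝ) b).indicator (fun _ => 1 / b) x))) :
    P {ω | X ω ≤ Y ω} = ENNReal.ofReal (b / (2 * a)) := by
  rw [hXY.measure_setOf_le_eq_prod_map hX.aemeasurable hY.aemeasurable, hXunif, hYunif,
    withDensity_ofReal_indicator_const _ measurableSet_Icc,
    withDensity_ofReal_indicator_const _ measurableSet_Icc, Measure.prod_smul_left,
    Measure.prod_smul_right, Measure.smul_apply, Measure.smul_apply,
    volume_restrict_Icc_prod_setOf_le hb.le hba, smul_eq_mul, smul_eq_mul,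
    ← ENNReal.ofReal_mul (by positivity), ← ENNReal.ofReal_mul (by positivity)]
  congr 1
  field_simp

theorem prob_dist_case1_small_general
    {Ω : Type*} [MeasurableSpace Ω] (P : Measure Ω) [IsProbabilityMeasure P]
    (L C₁ C₂ q₁ q₂ h : ℝ) (hL : 0 < L) (hC₁ : 0 < C₁) (hC₂ : 0 < C₂)
    (hq₁ : 0 < q₁) (hq : q₁ < q₂) (hh : 0 < h)
    (ℏ₁ ℏ₂ hstar β₁ β₂ : ℝ)
    (hℏ₁ : ℏ₁ = (L / C₁) ^ (1 / q₁))
    (hstar_def : hstar = (C₁ / C₂) ^ (1 / (q₂ - q₁)))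
    (hβ₁ : β₁ = min L (C₁ * h ^ q₁)) (hβ₂ : β₂ = min L (C₂ * h ^ q₂))
    (X₁ X₂ : Ω → ℝ) (hX₁ : Measurable X₁) (hX₂ : Measurable X₂)
    (hindep : IndepFun X₁ X₂ P)
    (hX₁unif : Measure.map X₁ P =
      volume.withDensity
        (fun x => ENNReal.ofReal ((Set.Icc (0:ℝ) β₁).indicator (fun _ => 1 / β₁) x)))
    (hX₂unif : Measure.map X₂ P =
      volume.withDensity
        (fun x => ENNReal.ofReal ((Set.Icc (0:ℝ) β₂).indicator (fun _ => 1 / β₂) x)))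
    (hcase : max ℏ₁ ℏ₂ ≤ hstar) (hrange : h ≤ ℏ₁) :
    P {ω | X₁ ω ≤ X₂ ω} = ENNReal.ofReal ((1/2) * (h / hstar) ^ (q₂ - q₁)) := by
  have hq₂₁ : 0 < q₂ - q₁ := sub_pos.2 hq
  have hβ₁L : C₁ * h ^ q₁ ≤ L :=
    (Real.mul_rpow_le_iff_le_rpow_one_div hC₁ hL.le hq₁ hh.le).2 (hℏ₁ ▸ hrange)
  have hβ₂β₁ : C₂ * h ^ q₂ ≤ C₁ * h ^ q₁ := by
    have hhstar : h ≤ hstar := hrange.trans ((le_max_left _ _).trans hcase)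
    have : C₂ * h ^ (q₂ - q₁) ≤ C₁ :=
      (Real.mul_rpow_le_iff_le_rpow_one_div hC₂ hC₁.le hq₂₁ hh.le).2 (hstar_def ▸ hhstar)
    calc C₂ * h ^ q₂ = C₂ * h ^ (q₂ - q₁) * h ^ q₁ := by
          rw [mul_assoc, ← Real.rpow_add hh, sub_add_cancel]
      _ ≤ C₁ * h ^ q₁ := by gcongr
  rw [min_eq_right hβ₁L] at hβ₁
  rw [min_eq_right (hβ₂β₁.trans hβ₁L)] at hβ₂
  subst hβ₁ hβ₂
  rw [measure_setOf_le_of_uniform_Icc (by positivity) (by positivity) hβ₂β₁ hX₁ hX₂ hindep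
    hX₁unif hX₂unif]
  have hstar_rpow : hstar ^ (q₂ - q₁) = C₁ / C₂ := by
    rw [hstar_def, one_div, Real.rpow_inv_rpow (by positivity) hq₂₁.ne']
  rw [Real.div_rpow hh.le (hstar_def ▸ by positivity), hstar_rpow, Real.rpow_sub hh]
  congr 1
  field_simp

/-- If h* ≥ max(ℏ₁,ℏ₂) and 0 < h ≤ ℏ₁, then P{X₁ ≤ X₂} = (1/2)·(h/h*)^(q₂-q₁). -/
theorem prob_dist_case1_small
    {Ω : Type*} [MeasurableSpace Ω] (P : Measure Ω) [IsProbabilityMeasure P]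
    (L C₁ C₂ q₁ q₂ h : ℝ) (hL : 0 < L) (hC₁ : 0 < C₁) (hC₂ : 0 < C₂)
    (hq₁ : 0 < q₁) (hq : q₁ < q₂) (hh : 0 < h)
    (ℏ₁ ℏ₂ hstar β₁ β₂ : ℝ)
    (hℏ₁ : ℏ₁ = (L / C₁) ^ (1 / q₁)) (hℏ₂ : ℏ₂ = (L / C₂) ^ (1 / q₂))
    (hstar_def : hstar = (C₁ / C₂) ^ (1 / (q₂ - q₁)))
    (hβ₁ : β₁ = min L (C₁ * h ^ q₁)) (hβ₂ : β₂ = min L (C₂ * h ^ q₂))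
    (X₁ X₂ : Ω → ℝ) (hX₁ : Measurable X₁) (hX₂ : Measurable X₂)
    (hindep : IndepFun X₁ X₂ P)
    (hX₁unif : Measure.map X₁ P =
      volume.withDensity
        (fun x => ENNReal.ofReal ((Set.Icc (0:ℝ) β₁).indicator (fun _ => 1 / β₁) x)))
    (hX₂unif : Measure.map X₂ P =
      volume.withDensity
        (fun x => ENNReal.ofReal ((Set.Icc (0:ℝ) β₂).indicator (fun _ => 1 / β₂) x)))
    (hcase : max ℏ₁ ℏ₂ ≤ hstar) (hrange : h ≤ ℏ₁) :
    P {ω | X₁ ω ≤ X₂ ω} = ENNReal.ofReal ((1/2) * (h / hstar) ^ (q₂ - q₁)) :=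
  prob_dist_case1_small_general P L C₁ C₂ q₁ q₂ h hL hC₁ hC₂ hq₁ hq hh ℏ₁ ℏ₂ hstar β₁ β₂ hℏ₁
    hstar_def hβ₁ hβ₂ X₁ X₂ hX₁ hX₂ hindep hX₁unif hX₂unif hcase hrange
end

section
/- Let L > 0, C₁ > 0, C₂ > 0 be real numbers and q₁ < q₂ positive real numbers, and let h > 0. Set ħ₁ = (L/C₁)^{1/q₁}, ħ₂ = (L/C₂)^{1/q₂}, h* = (C₁/C₂)^{1/(q₂-q₁)}, and βᵢ = min(L, Cᵢ·h^{qᵢ}) for i = 1, 2. Let X₁ and X₂ be independent real random variables on a probability space (Ω, ℙ), with Xᵢ uniformly distributed on [0, βᵢ]. If h* ≥ max(ħ₁, ħ₂) and ħ₁ ≤ h ≤ ħ₂, then ℙ{X₁ ≤ X₂} = (1/2)·(h/ħ₂)^{q₂}. -/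
open MeasureTheory ProbabilityTheory Set

noncomputable def uniformIcc (a : ℝ) : Measure ℝ :=
  ENNReal.ofReal (1 / a) • volume.restrict (Icc 0 a)

instance (a : ℝ) : IsFiniteMeasure (uniformIcc a) :=
  Measure.smul_finite _ ENNReal.ofReal_ne_top

lemma withDensity_ofReal_indicator_Icc (a : ℝ) :
    volume.withDensity (fun x => ENNReal.ofReal ((Icc 0 a).indicator (fun _ => 1 / a) x)) =
      uniformIcc a :=
  withDensity_ofReal_indicator_const volume measurableSet_Icc _

lemma uniformIcc_Iic {a y : ℝ} (ha : 0 < a) (hy : y ∈ Icc 0 a) :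
    uniformIcc a (Iic y) = ENNReal.ofReal (y / a) := by
  have hinter : Iic y ∩ Icc 0 a = Icc 0 y := by
    ext x; simp only [mem_inter_iff, mem_Iic, mem_Icc]; grind
  rw [uniformIcc, Measure.smul_apply, Measure.restrict_apply measurableSet_Iic, hinter,
    Real.volume_Icc, smul_eq_mul, ← ENNReal.ofReal_mul (by positivity)]
  ring_nf

lemma lintegral_Icc_ofReal_div {a b : ℝ} (ha : 0 ≤ a) (hb : 0 ≤ b) :
    ∫⁻ y in Icc 0 b, ENNReal.ofReal (y / a) = ENNReal.ofReal (b ^ 2 / (2 * a)) := by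
  rw [← ofReal_integral_eq_lintegral_ofReal
    (by fun_prop : Continuous fun y : ℝ => y / a).integrableOn_Icc
    (ae_restrict_of_forall_mem measurableSet_Icc fun y hy => div_nonneg hy.1 ha),
    integral_Icc_eq_integral_Ioc, ← intervalIntegral.integral_of_le hb,
    intervalIntegral.integral_div, integral_id]
  ring_nf

lemma uniformIcc_prod_fst_le_snd {a b : ℝ} (hb : 0 < b) (hba : b ≤ a) :
    ((uniformIcc a).prod (uniformIcc b)) {p : ℝ × ℝ | p.1 ≤ p.2} =
      ENNReal.ofReal (b / (2 * a)) := by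
  have ha : 0 < a := hb.trans_le hba
  have hslice (y : ℝ) : (fun x => (x, y)) ⁻¹' {p : ℝ × ℝ | p.1 ≤ p.2} = Iic y := rfl
  rw [Measure.prod_apply_symm (measurableSet_le measurable_fst measurable_snd), uniformIcc,
    lintegral_smul_measure]
  simp_rw [hslice]
  rw [setLIntegral_congr_fun measurableSet_Icc
      (fun y hy => uniformIcc_Iic ha ⟨hy.1, hy.2.trans hba⟩), lintegral_Icc_ofReal_div ha.le hb.le,
    smul_eq_mul, ← ENNReal.ofReal_mul (by positivity)]
  congr 1
  field_simp

lemma ProbabilityTheory.IndepFun.measure_le_eq_prod_map {Ω : Type*} [MeasurableSpace Ω]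
    {P : Measure Ω} [IsFiniteMeasure P] {X Y : Ω → ℝ} (hX : Measurable X) (hY : Measurable Y)
    (h : IndepFun X Y P) :
    P {ω | X ω ≤ Y ω} = ((P.map X).prod (P.map Y)) {p : ℝ × ℝ | p.1 ≤ p.2} := by
  rw [← h.map_prod_eq_prod_map_map hX.aemeasurable hY.aemeasurable,
    Measure.map_apply (hX.prodMk hY) (measurableSet_le measurable_fst measurable_snd)]
  rfl

lemma div_rpow_one_div_le_iff {L C q h : ℝ} (hL : 0 ≤ L) (hC : 0 < C) (hq : 0 < q) (hh : 0 ≤ h) :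
    (L / C) ^ (1 / q) ≤ h ↔ L ≤ C * h ^ q := by
  rw [one_div, Real.rpow_inv_le_iff_of_pos (div_nonneg hL hC.le) hh hq, div_le_iff₀' hC]

lemma le_div_rpow_one_div_iff {L C q h : ℝ} (hL : 0 ≤ L) (hC : 0 < C) (hq : 0 < q) (hh : 0 ≤ h) :
    h ≤ (L / C) ^ (1 / q) ↔ C * h ^ q ≤ L := by
  rw [one_div, Real.le_rpow_inv_iff_of_pos hh (div_nonneg hL hC.le) hq, le_div_iff₀' hC]

lemma div_div_rpow_one_div_rpow {L C q h : ℝ} (hL : 0 < L) (hC : 0 < C) (hq : 0 < q)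
    (hh : 0 ≤ h) : (h / (L / C) ^ (1 / q)) ^ q = C * h ^ q / L := by
  rw [Real.div_rpow hh (by positivity), ← Real.rpow_mul (by positivity),
    one_div_mul_cancel hq.ne', Real.rpow_one]
  field_simp

theorem prob_dist_case1_middle_general
    {Ω : Type*} [MeasurableSpace Ω] (P : Measure Ω) [IsProbabilityMeasure P]
    (L C₁ C₂ q₁ q₂ h : ℝ) (hL : 0 < L) (hC₁ : 0 < C₁) (hC₂ : 0 < C₂)
    (hq₁ : 0 < q₁) (hq : q₁ < q₂) (hh : 0 < h)
    (ℏ₁ ℏ₂ β₁ β₂ : ℝ)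
    (hℏ₁ : ℏ₁ = (L / C₁) ^ (1 / q₁)) (hℏ₂ : ℏ₂ = (L / C₂) ^ (1 / q₂))
    (hβ₁ : β₁ = min L (C₁ * h ^ q₁)) (hβ₂ : β₂ = min L (C₂ * h ^ q₂))
    (X₁ X₂ : Ω → ℝ) (hX₁ : Measurable X₁) (hX₂ : Measurable X₂)
    (hindep : IndepFun X₁ X₂ P)
    (hX₁unif : Measure.map X₁ P =
      volume.withDensity
        (fun x => ENNReal.ofReal ((Set.Icc (0:ℝ) β₁).indicator (fun _ => 1 / β₁) x)))
    (hX₂unif : Measure.map X₂ P =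
      volume.withDensity
        (fun x => ENNReal.ofReal ((Set.Icc (0:ℝ) β₂).indicator (fun _ => 1 / β₂) x)))
    (hrange₁ : ℏ₁ ≤ h) (hrange₂ : h ≤ ℏ₂) :
    P {ω | X₁ ω ≤ X₂ ω} = ENNReal.ofReal ((1/2) * (h / ℏ₂) ^ q₂) := by
  have hq₂ : 0 < q₂ := hq₁.trans hq
  have hβ₁L : β₁ = L :=
    hβ₁ ▸ min_eq_left ((div_rpow_one_div_le_iff hL.le hC₁ hq₁ hh.le).mp (hℏ₁ ▸ hrange₁))
  have hβ₂L : β₂ ≤ L := hβ₂ ▸ min_le_left _ _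
  have hβ₂_eq : β₂ = C₂ * h ^ q₂ :=
    hβ₂ ▸ min_eq_right ((le_div_rpow_one_div_iff hL.le hC₂ hq₂ hh.le).mp (hℏ₂ ▸ hrange₂))
  rw [hindep.measure_le_eq_prod_map hX₁ hX₂, hX₁unif, hX₂unif,
    withDensity_ofReal_indicator_Icc, withDensity_ofReal_indicator_Icc, hβ₁L,
    uniformIcc_prod_fst_le_snd (hβ₂_eq ▸ by positivity) hβ₂L, hℏ₂,
    div_div_rpow_one_div_rpow hL hC₂ hq₂ hh.le, ← hβ₂_eq]
  congr 1
  ring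

/-- If h* ≥ max(ℏ₁,ℏ₂) and ℏ₁ ≤ h ≤ ℏ₂, then P{X₁ ≤ X₂} = (1/2)·(h/ℏ₂)^q₂. -/
theorem prob_dist_case1_middle
    {Ω : Type*} [MeasurableSpace Ω] (P : Measure Ω) [IsProbabilityMeasure P]
    (L C₁ C₂ q₁ q₂ h : ℝ) (hL : 0 < L) (hC₁ : 0 < C₁) (hC₂ : 0 < C₂)
    (hq₁ : 0 < q₁) (hq : q₁ < q₂) (hh : 0 < h)
    (ℏ₁ ℏ₂ hstar β₁ β₂ : ℝ)
    (hℏ₁ : ℏ₁ = (L / C₁) ^ (1 / q₁)) (hℏ₂ : ℏ₂ = (L / C₂) ^ (1 / q₂))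
    (hstar_def : hstar = (C₁ / C₂) ^ (1 / (q₂ - q₁)))
    (hβ₁ : β₁ = min L (C₁ * h ^ q₁)) (hβ₂ : β₂ = min L (C₂ * h ^ q₂))
    (X₁ X₂ : Ω → ℝ) (hX₁ : Measurable X₁) (hX₂ : Measurable X₂)
    (hindep : IndepFun X₁ X₂ P)
    (hX₁unif : Measure.map X₁ P =
      volume.withDensity
        (fun x => ENNReal.ofReal ((Set.Icc (0:ℝ) β₁).indicator (fun _ => 1 / β₁) x)))
    (hX₂unif : Measure.map X₂ P =
      volume.withDensity
        (fun x => ENNReal.ofReal ((Set.Icc (0:ℝ) β₂).indicator (fun _ => 1 / β₂) x)))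
    (hcase : max ℏ₁ ℏ₂ ≤ hstar) (hrange₁ : ℏ₁ ≤ h) (hrange₂ : h ≤ ℏ₂) :
    P {ω | X₁ ω ≤ X₂ ω} = ENNReal.ofReal ((1/2) * (h / ℏ₂) ^ q₂) :=
  prob_dist_case1_middle_general P L C₁ C₂ q₁ q₂ h hL hC₁ hC₂ hq₁ hq hh ℏ₁ ℏ₂ β₁ β₂ hℏ₁ hℏ₂ hβ₁ hβ₂
    X₁ X₂ hX₁ hX₂ hindep hX₁unif hX₂unif hrange₁ hrange₂
end

section
/- Let L > 0, C₁ > 0, C₂ > 0 be real numbers and q₁ < q₂ positive real numbers, and let h > 0. Set ħ₁ = (L/C₁)^{1/q₁}, ħ₂ = (L/C₂)^{1/q₂}, h* = (C₁/C₂)^{1/(q₂-q₁)}, and βᵢ = min(L, Cᵢ·h^{qᵢ}) for i = 1, 2. Let X₁ and X₂ be independent real random variables on a probability space (Ω, ℙ), with Xᵢ uniformly distributed on [0, βᵢ]. If h* ≤ min(ħ₁, ħ₂) and h* ≤ h ≤ ħ₂, then ℙ{X₁ ≤ X₂} = 1 - (1/2)·(h*/h)^{q₂-q₁}. -/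
/-!
For h* ≤ h ≤ ħ₂ neither cap `L` is active: βᵢ = Cᵢ h^{qᵢ}, and β₁ / β₂ = (h*/h)^{q₂-q₁} ≤ 1.
For independent uniforms on [0, a] and [0, b] with a ≤ b, conditioning on X₁ = x gives
ℙ{X₁ ≤ X₂} = (1/a) ∫₀^a (b - x)/b dx = 1 - a/(2b).
-/

open MeasureTheory ProbabilityTheory Set

lemma ProbabilityTheory.IndepFun.measure_preimage_eq_prod_map {Ω β γ : Type*} [MeasurableSpace Ω]
    [MeasurableSpace β] [MeasurableSpace γ] {P : Measure Ω} [IsFiniteMeasure P]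
    {X : Ω → β} {Y : Ω → γ} (hX : Measurable X) (hY : Measurable Y) (hXY : IndepFun X Y P)
    {S : Set (β × γ)} (hS : MeasurableSet S) :
    P ((fun ω => (X ω, Y ω)) ⁻¹' S) = ((P.map X).prod (P.map Y)) S := by
  rw [← (indepFun_iff_map_prod_eq_prod_map_map hX.aemeasurable hY.aemeasurable).mp hXY,
    Measure.map_apply (hX.prodMk hY) hS]

lemma MeasureTheory.Measure.prod_setOf_fst_le_snd (μ ν : Measure ℝ) [SFinite ν] :
    (μ.prod ν) {p : ℝ × ℝ | p.1 ≤ p.2} = ∫⁻ x, ν (Ici x) ∂μ :=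
  Measure.prod_apply (measurableSet_le measurable_fst measurable_snd)

lemma uniformIcc_Ici {b x : ℝ} (hx : x ∈ Icc 0 b) :
    (ENNReal.ofReal (1 / b) • volume.restrict (Icc 0 b)) (Ici x) = ENNReal.ofReal ((b - x) / b) := by
  have hb : 0 ≤ b := hx.1.trans hx.2
  have hslice : Ici x ∩ Icc 0 b = Icc x b := by
    ext y
    simp only [mem_inter_iff, mem_Ici, mem_Icc]
    constructor
    · rintro ⟨hxy, -, hyb⟩
      exact ⟨hxy, hyb⟩
    · rintro ⟨hxy, hyb⟩
      exact ⟨hxy, hx.1.trans hxy, hyb⟩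
  rw [Measure.smul_apply, Measure.restrict_apply measurableSet_Ici, hslice, Real.volume_Icc,
    smul_eq_mul, ← ENNReal.ofReal_mul (by positivity), one_div_mul_eq_div]

lemma setIntegral_Icc_sub_div {a b : ℝ} (ha : 0 ≤ a) (hb : b ≠ 0) :
    ∫ x in Icc 0 a, (b - x) / b = a - a ^ 2 / (2 * b) := by
  rw [integral_Icc_eq_integral_Ioc, ← intervalIntegral.integral_of_le ha,
    intervalIntegral.integral_div, intervalIntegral.integral_sub intervalIntegrable_const
      intervalIntegral.intervalIntegrable_id, intervalIntegral.integral_const, integral_id]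
  field_simp
  ring

lemma uniformIcc_prod_setOf_fst_le_snd {a b : ℝ} (ha : 0 < a) (hab : a ≤ b) :
    ((ENNReal.ofReal (1 / a) • volume.restrict (Icc 0 a)).prod
        (ENNReal.ofReal (1 / b) • volume.restrict (Icc 0 b))) {p : ℝ × ℝ | p.1 ≤ p.2} =
      ENNReal.ofReal (1 - a / (2 * b)) := by
  have hb : 0 < b := ha.trans_le hab
  have htail : ∀ x ∈ Icc 0 a, (ENNReal.ofReal (1 / b) • volume.restrict (Icc 0 b)) (Ici x) =
      ENNReal.ofReal ((b - x) / b) :=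
    fun x hx => uniformIcc_Ici ⟨hx.1, hx.2.trans hab⟩
  have hnonneg : 0 ≤ᵐ[volume.restrict (Icc 0 a)] fun x => (b - x) / b :=
    (ae_restrict_iff' measurableSet_Icc).mpr <| .of_forall fun x hx =>
      div_nonneg (by linarith [hx.2]) hb.le
  have hint : IntegrableOn (fun x => (b - x) / b) (Icc 0 a) :=
    ((continuous_const.sub continuous_id).div_const b).integrableOn_Icc
  rw [Measure.prod_setOf_fst_le_snd, lintegral_smul_measure,
    setLIntegral_congr_fun measurableSet_Icc htail,
    ← ofReal_integral_eq_lintegral_ofReal hint hnonneg, setIntegral_Icc_sub_div ha.le hb.ne',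
    smul_eq_mul, ← ENNReal.ofReal_mul (by positivity)]
  congr 1
  field_simp

theorem measure_le_of_indepFun_uniformIcc {Ω : Type*} [MeasurableSpace Ω] {P : Measure Ω}
    [IsFiniteMeasure P] {a b : ℝ} (ha : 0 < a) (hab : a ≤ b) {X Y : Ω → ℝ}
    (hX : Measurable X) (hY : Measurable Y) (hXY : IndepFun X Y P)
    (hXunif : P.map X =
      volume.withDensity (fun x => ENNReal.ofReal ((Icc (0:ℝ) a).indicator (fun _ => 1 / a) x)))
    (hYunif : P.map Y =
      volume.withDensity (fun x => ENNReal.ofReal ((Icc (0:ℝ) b).indicator (fun _ => 1 / b) x))) :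
    P {ω | X ω ≤ Y ω} = ENNReal.ofReal (1 - a / (2 * b)) := by
  rw [← uniformIcc_prod_setOf_fst_le_snd ha hab,
    ← withDensity_ofReal_indicator_const _ measurableSet_Icc,
    ← withDensity_ofReal_indicator_const _ measurableSet_Icc, ← hXunif, ← hYunif]
  exact hXY.measure_preimage_eq_prod_map hX hY (measurableSet_le measurable_fst measurable_snd)

lemma mul_rpow_le_of_le_rpow_one_div {L C q h : ℝ} (hL : 0 ≤ L) (hC : 0 < C) (hq : 0 < q)
    (hh : 0 ≤ h) (hle : h ≤ (L / C) ^ (1 / q)) : C * h ^ q ≤ L := by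
  have := Real.rpow_le_rpow hh hle hq.le
  rw [← Real.rpow_mul (by positivity), one_div_mul_cancel hq.ne', Real.rpow_one,
    le_div_iff₀ hC] at this
  linarith

lemma rpow_sub_div_eq {C₁ C₂ q₁ q₂ h : ℝ} (hC₁ : 0 < C₁) (hC₂ : 0 < C₂) (hq : q₁ ≠ q₂)
    (hh : 0 < h) :
    ((C₁ / C₂) ^ (1 / (q₂ - q₁)) / h) ^ (q₂ - q₁) = C₁ * h ^ q₁ / (C₂ * h ^ q₂) := by
  rw [Real.div_rpow (by positivity) hh.le, ← Real.rpow_mul (by positivity),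
    one_div_mul_cancel (sub_ne_zero.mpr hq.symm), Real.rpow_one, Real.rpow_sub hh]
  field_simp

theorem prob_dist_case2_mid1_general
    {Ω : Type*} [MeasurableSpace Ω] (P : Measure Ω) [IsProbabilityMeasure P]
    (L C₁ C₂ q₁ q₂ h : ℝ) (hL : 0 < L) (hC₁ : 0 < C₁) (hC₂ : 0 < C₂)
    (hq₁ : 0 < q₁) (hq : q₁ < q₂) (hh : 0 < h)
    (ℏ₂ hstar β₁ β₂ : ℝ)
    (hℏ₂ : ℏ₂ = (L / C₂) ^ (1 / q₂))
    (hstar_def : hstar = (C₁ / C₂) ^ (1 / (q₂ - q₁)))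
    (hβ₁ : β₁ = min L (C₁ * h ^ q₁)) (hβ₂ : β₂ = min L (C₂ * h ^ q₂))
    (X₁ X₂ : Ω → ℝ) (hX₁ : Measurable X₁) (hX₂ : Measurable X₂)
    (hindep : IndepFun X₁ X₂ P)
    (hX₁unif : Measure.map X₁ P =
      volume.withDensity
        (fun x => ENNReal.ofReal ((Set.Icc (0:ℝ) β₁).indicator (fun _ => 1 / β₁) x)))
    (hX₂unif : Measure.map X₂ P =
      volume.withDensity
        (fun x => ENNReal.ofReal ((Set.Icc (0:ℝ) β₂).indicator (fun _ => 1 / β₂) x)))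
    (hrange₁ : hstar ≤ h) (hrange₂ : h ≤ ℏ₂) :
    P {ω | X₁ ω ≤ X₂ ω} = ENNReal.ofReal (1 - (1/2) * (hstar / h) ^ (q₂ - q₁)) := by
  have hstar_pos : 0 < hstar := hstar_def ▸ by positivity
  have hβ₂_le : C₂ * h ^ q₂ ≤ L :=
    mul_rpow_le_of_le_rpow_one_div hL.le hC₂ (hq₁.trans hq) hh.le (hℏ₂ ▸ hrange₂)
  have hratio : (hstar / h) ^ (q₂ - q₁) = C₁ * h ^ q₁ / (C₂ * h ^ q₂) :=
    hstar_def ▸ rpow_sub_div_eq hC₁ hC₂ hq.ne hh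
  have hβ₁_le_β₂ : C₁ * h ^ q₁ ≤ C₂ * h ^ q₂ := by
    rw [← div_le_one (by positivity), ← hratio]
    exact Real.rpow_le_one (by positivity) ((div_le_one hh).mpr hrange₁) (sub_nonneg.mpr hq.le)
  rw [min_eq_right (hβ₁_le_β₂.trans hβ₂_le)] at hβ₁
  rw [min_eq_right hβ₂_le] at hβ₂
  subst hβ₁ hβ₂
  rw [measure_le_of_indepFun_uniformIcc (by positivity) hβ₁_le_β₂ hX₁ hX₂ hindep hX₁unif hX₂unif,
    hratio]
  congr 1
  ring

/-- If h* ≤ min(ℏ₁,ℏ₂) and h* ≤ h ≤ ℏ₂, then P{X₁ ≤ X₂} = 1 - (1/2)·(h*/h)^(q₂-q₁). -/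
theorem prob_dist_case2_mid1
    {Ω : Type*} [MeasurableSpace Ω] (P : Measure Ω) [IsProbabilityMeasure P]
    (L C₁ C₂ q₁ q₂ h : ℝ) (hL : 0 < L) (hC₁ : 0 < C₁) (hC₂ : 0 < C₂)
    (hq₁ : 0 < q₁) (hq : q₁ < q₂) (hh : 0 < h)
    (ℏ₁ ℏ₂ hstar β₁ β₂ : ℝ)
    (hℏ₁ : ℏ₁ = (L / C₁) ^ (1 / q₁)) (hℏ₂ : ℏ₂ = (L / C₂) ^ (1 / q₂))
    (hstar_def : hstar = (C₁ / C₂) ^ (1 / (q₂ - q₁)))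
    (hβ₁ : β₁ = min L (C₁ * h ^ q₁)) (hβ₂ : β₂ = min L (C₂ * h ^ q₂))
    (X₁ X₂ : Ω → ℝ) (hX₁ : Measurable X₁) (hX₂ : Measurable X₂)
    (hindep : IndepFun X₁ X₂ P)
    (hX₁unif : Measure.map X₁ P =
      volume.withDensity
        (fun x => ENNReal.ofReal ((Set.Icc (0:ℝ) β₁).indicator (fun _ => 1 / β₁) x)))
    (hX₂unif : Measure.map X₂ P =
      volume.withDensity
        (fun x => ENNReal.ofReal ((Set.Icc (0:ℝ) β₂).indicator (fun _ => 1 / β₂) x)))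
    (hcase : hstar ≤ min ℏ₁ ℏ₂) (hrange₁ : hstar ≤ h) (hrange₂ : h ≤ ℏ₂) :
    P {ω | X₁ ω ≤ X₂ ω} = ENNReal.ofReal (1 - (1/2) * (hstar / h) ^ (q₂ - q₁)) :=
  prob_dist_case2_mid1_general P L C₁ C₂ q₁ q₂ h hL hC₁ hC₂ hq₁ hq hh ℏ₂ hstar β₁ β₂ hℏ₂ hstar_def
    hβ₁ hβ₂ X₁ X₂ hX₁ hX₂ hindep hX₁unif hX₂unif hrange₁ hrange₂
end
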